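/- There is a constant C such that for every μ > 1 and every unit vector ξ = (ξ₁, ξ₂) ∈ ℝ² with ξ₁ > 0 and ξ₂ < ξ₁, |I(μ, ξ)| ≤ (C/μ) ( |ξ₂/ξ₁| + |(ξ₁+ξ₂)/(ξ₁−ξ₂)| + 1/(ξ₁(ξ₁−ξ₂)) ). -/

import Mathlib

open Real Set

noncomputable def gfun (t : ℝ) : ℝ := (Real.sqrt (1 - t^2) - t * Real.arccos t) / Real.pi

noncomputable def enorm2 (x : ℝ × ℝ) : ℝ := Real.sqrt (x.1^2 + x.2^2)

noncomputable def osc (μ : ℝ) (ξ : ℝ × ℝ) : ℂ :=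
  ∫ t in (-1:ℝ)..1,
    Complex.exp (-Complex.I * (μ:ℂ) * ((ξ.1:ℂ) * (t:ℂ) + (ξ.2:ℂ) * (Complex.ofReal (gfun t))))
      * ((ξ.2:ℂ) - (ξ.1:ℂ) * (Complex.ofReal (deriv gfun t)))

/-!
With `ξ = (A, B)` the phase `φ t = A t + B g t` has `φ' = A - B θ` and the amplitude is
`B - A g' = B + A θ`, where `θ t = arccos t / π ∈ [0, 1]`; so `0 < A` and `B < A` make `φ'` positive
on `[-1, 1]` (no critical point). Write the amplitude as `φ' · f` with the Möbius ratio
`f = (B + A θ) / (A - B θ)` and integrate by parts against `e^{-iμφ} φ' = (i/μ) (e^{-iμφ})'`.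
The boundary terms are `|f(±1)| / μ`, and since `f` is monotone, the remaining integral is at most
`(total variation of f) / μ = (f(-1) - f(1)) / μ`, with `f(1) = B / A`, `f(-1) = (A + B) / (A - B)`.
-/

open MeasureTheory intervalIntegral
open Complex (I)
open scoped Complex

lemma norm_cexp_neg_I_mul (μ x : ℝ) : ‖cexp (-I * μ * x)‖ = 1 := by
  rw [show -I * μ * x = ((-(μ * x) : ℝ) : ℂ) * I by push_cast; ring]
  exact Complex.norm_exp_ofReal_mul_I _

section Antitone

variable {f f' : ℝ → ℝ} {a b : ℝ}

lemma intervalIntegrable_deriv_of_nonpos_of_le (hab : a ≤ b) (hf : ContinuousOn f (Icc a b))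
    (hff' : ∀ t ∈ Ioo a b, HasDerivAt f (f' t) t) (hf' : ∀ t ∈ Ioo a b, f' t ≤ 0) :
    IntervalIntegrable f' volume a b := by
  have := intervalIntegrable_deriv_of_nonneg (g := -f) (g' := -f') (a := a) (b := b)
    (by simpa [hab] using hf.neg) (by simpa [hab] using fun t ht ↦ (hff' t ht).neg)
    (by simpa [hab] using fun t ht ↦ neg_nonneg.2 (hf' t ht))
  simpa using this.neg

lemma integral_abs_deriv_of_nonpos (hab : a ≤ b) (hf : ContinuousOn f (Icc a b))
    (hff' : ∀ t ∈ Ioo a b, HasDerivAt f (f' t) t) (hf' : ∀ t ∈ Ioo a b, f' t ≤ 0) :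
    ∫ t in a..b, |f' t| = f a - f b := by
  rw [integral_congr_Ioo_of_le hab (g := fun t ↦ -f' t) fun t ht ↦ abs_of_nonpos (hf' t ht),
    intervalIntegral.integral_neg, integral_eq_sub_of_hasDerivAt_of_le hab hf hff'
      (intervalIntegrable_deriv_of_nonpos_of_le hab hf hff' hf'), neg_sub]

end Antitone

lemma IntervalIntegrable.ofReal {f : ℝ → ℝ} {a b : ℝ} (hf : IntervalIntegrable f volume a b) :
    IntervalIntegrable (fun t ↦ (f t : ℂ)) volume a b :=
  ⟨hf.1.ofReal, hf.2.ofReal⟩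

lemma hasDerivAt_cexp_neg_I_mul_mul_I_div {φ : ℝ → ℝ} {φ' t μ : ℝ} (hμ : μ ≠ 0)
    (hφ : HasDerivAt φ φ' t) :
    HasDerivAt (fun t ↦ cexp (-I * μ * φ t) * (I / μ)) (cexp (-I * μ * φ t) * φ') t := by
  refine ((hφ.ofReal_comp.const_mul (-I * μ)).cexp.mul_const (I / μ)).congr_deriv ?_
  have hμ' : (μ : ℂ) ≠ 0 := by exact_mod_cast hμ
  have : -I * μ * φ' * (I / μ) = φ' := by
    field_simp
    linear_combination (-(φ' : ℂ)) * Complex.I_sq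
  rw [mul_assoc, this]

lemma norm_integral_cexp_mul_deriv_mul_le {φ φ' f f' : ℝ → ℝ} {a b μ : ℝ} (hab : a ≤ b)
    (hμ : μ ≠ 0) (hφ : ContinuousOn φ (Icc a b)) (hφφ' : ∀ t ∈ Ioo a b, HasDerivAt φ (φ' t) t)
    (hφ' : IntervalIntegrable φ' volume a b) (hf : ContinuousOn f (Icc a b))
    (hff' : ∀ t ∈ Ioo a b, HasDerivAt f (f' t) t) (hf' : IntervalIntegrable f' volume a b) :
    ‖∫ t in a..b, cexp (-I * μ * φ t) * (φ' t * f t : ℝ)‖ ≤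
      (|f a| + |f b| + ∫ t in a..b, |f' t|) / |μ| := by
  set E : ℝ → ℂ := fun t ↦ cexp (-I * μ * φ t)
  have hE : ContinuousOn E (uIcc a b) := by
    rw [uIcc_of_le hab]
    fun_prop
  have hv : ∀ t ∈ Ioo (min a b) (max a b), HasDerivAt (fun t ↦ E t * (I / μ)) (E t * φ' t) t :=
    fun t ht ↦ hasDerivAt_cexp_neg_I_mul_mul_I_div hμ
      (hφφ' t (by rwa [min_eq_left hab, max_eq_right hab] at ht))
  have hibp := integral_mul_deriv_eq_deriv_mul_of_hasDerivAt (u := fun t ↦ (f t : ℂ))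
    (u' := fun t ↦ (f' t : ℂ))
    (Complex.continuous_ofReal.comp_continuousOn (by rwa [uIcc_of_le hab]))
    (hE.mul continuousOn_const)
    (fun t ht ↦ (hff' t (by rwa [min_eq_left hab, max_eq_right hab] at ht)).ofReal_comp) hv
    hf'.ofReal (hφ'.ofReal.continuousOn_mul hE)
  have hnorm_v : ∀ t, ‖E t * (I / μ)‖ = 1 / |μ| := by
    intro t
    rw [norm_mul, norm_cexp_neg_I_mul, norm_div, Complex.norm_I, Complex.norm_real,
      Real.norm_eq_abs, one_mul]
  have hrest : ‖∫ t in a..b, (f' t : ℂ) * (E t * (I / μ))‖ ≤ (∫ t in a..b, |f' t|) / |μ| := by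
    calc _ ≤ ∫ t in a..b, ‖(f' t : ℂ) * (E t * (I / μ))‖ := norm_integral_le_integral_norm hab
      _ = ∫ t in a..b, |f' t| / |μ| := by
        simp only [norm_mul, hnorm_v, Complex.norm_real, Real.norm_eq_abs, mul_one_div]
      _ = _ := intervalIntegral.integral_div _ _
  have hintegrand : (fun t ↦ E t * ((φ' t * f t : ℝ) : ℂ)) =
      fun t ↦ (f t : ℂ) * (E t * φ' t) := by
    ext t; push_cast; ring
  rw [hintegrand, hibp]
  calc _ ≤ ‖(f b : ℂ) * (E b * (I / μ))‖ + ‖(f a : ℂ) * (E a * (I / μ))‖ +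
        ‖∫ t in a..b, (f' t : ℂ) * (E t * (I / μ))‖ := norm_sub_le_of_le (norm_sub_le _ _) le_rfl
    _ ≤ |f b| / |μ| + |f a| / |μ| + (∫ t in a..b, |f' t|) / |μ| := by
        simp only [norm_mul, hnorm_v, Complex.norm_real, Real.norm_eq_abs, mul_one_div]
        exact add_le_add_right hrest _
    _ = _ := by ring

@[fun_prop]
lemma continuous_gfun : Continuous gfun := by
  unfold gfun
  fun_prop

lemma hasDerivAt_gfun {t : ℝ} (ht : t ∈ Ioo (-1 : ℝ) 1) :
    HasDerivAt gfun (-(arccos t / π)) t := by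
  obtain ⟨h₁, h₂⟩ := ht
  have hpos : 0 < 1 - t ^ 2 := by nlinarith
  have hsqrt : HasDerivAt (fun t ↦ √(1 - t ^ 2)) (-(2 * t) / (2 * √(1 - t ^ 2))) t := by
    simpa using ((hasDerivAt_pow 2 t).const_sub 1).sqrt hpos.ne'
  have harccos := Real.hasDerivAt_arccos h₁.ne' h₂.ne
  refine ((hsqrt.sub ((hasDerivAt_id t).mul harccos)).div_const π).congr_deriv ?_
  have : √(1 - t ^ 2) ≠ 0 := (Real.sqrt_pos.2 hpos).ne'
  field_simp
  simp only [id]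
  ring

section Phase

variable {A B : ℝ}

lemma sub_mul_pos_of_mem_Icc (hA : 0 < A) (hBA : B < A) {s : ℝ} (hs : s ∈ Icc (0 : ℝ) 1) :
    0 < A - B * s := by
  obtain ⟨hs₀, hs₁⟩ := hs
  rcases le_or_gt B 0 with hB | hB <;> nlinarith

lemma arccos_div_pi_mem_Icc (t : ℝ) : arccos t / π ∈ Icc (0 : ℝ) 1 :=
  ⟨div_nonneg (arccos_nonneg t) pi_pos.le, div_le_one_of_le₀ (arccos_le_pi t) pi_pos.le⟩

lemma hasDerivAt_mobius {s : ℝ} (hs : A - B * s ≠ 0) :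
    HasDerivAt (fun s ↦ (B + A * s) / (A - B * s)) ((A ^ 2 + B ^ 2) / (A - B * s) ^ 2) s := by
  refine ((((hasDerivAt_id s).const_mul A).const_add B).div
    (((hasDerivAt_id s).const_mul B).const_sub A) hs).congr_deriv ?_
  simp only [id]
  ring

end Phase

section Osc

variable {A B : ℝ}

lemma hasDerivAt_amplitude_div_slope (hA : 0 < A) (hBA : B < A) {t : ℝ}
    (ht : t ∈ Ioo (-1 : ℝ) 1) :
    HasDerivAt (fun t ↦ (B + A * (arccos t / π)) / (A - B * (arccos t / π)))
      ((A ^ 2 + B ^ 2) / (A - B * (arccos t / π)) ^ 2 * (-(1 / √(1 - t ^ 2)) / π)) t := by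
  have hslope := (sub_mul_pos_of_mem_Icc hA hBA (arccos_div_pi_mem_Icc t)).ne'
  exact (hasDerivAt_mobius hslope).comp t ((Real.hasDerivAt_arccos ht.1.ne' ht.2.ne).div_const π)

lemma hasDerivAt_phase {t : ℝ} (ht : t ∈ Ioo (-1 : ℝ) 1) :
    HasDerivAt (fun t ↦ A * t + B * gfun t) (A - B * (arccos t / π)) t := by
  refine (((hasDerivAt_id t).const_mul A).add ((hasDerivAt_gfun ht).const_mul B)).congr_deriv ?_
  simp only [mul_one]
  ring

lemma osc_eq_integral (hA : 0 < A) (hBA : B < A) (μ : ℝ) :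
    osc μ (A, B) = ∫ t in (-1 : ℝ)..1, cexp (-I * μ * (A * t + B * gfun t : ℝ)) *
      ((A - B * (arccos t / π)) * ((B + A * (arccos t / π)) / (A - B * (arccos t / π))) : ℝ) := by
  refine integral_congr_uIoo fun t ht ↦ ?_
  rw [uIoo_of_le (by norm_num)] at ht
  have hslope := (sub_mul_pos_of_mem_Icc hA hBA (arccos_div_pi_mem_Icc t)).ne'
  simp only [(hasDerivAt_gfun ht).deriv, mul_div_cancel₀ _ hslope]
  push_cast
  ring

lemma norm_osc_le (hA : 0 < A) (hBA : B < A) {μ : ℝ} (hμ : 0 < μ) :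
    ‖osc μ (A, B)‖ ≤ 2 / μ * (|B / A| + |(A + B) / (A - B)|) := by
  set f : ℝ → ℝ := fun t ↦ (B + A * (arccos t / π)) / (A - B * (arccos t / π))
  set f' : ℝ → ℝ := fun t ↦
    (A ^ 2 + B ^ 2) / (A - B * (arccos t / π)) ^ 2 * (-(1 / √(1 - t ^ 2)) / π)
  have hf : ContinuousOn f (Icc (-1) 1) :=
    ContinuousOn.div (by fun_prop) (by fun_prop)
      fun t _ ↦ (sub_mul_pos_of_mem_Icc hA hBA (arccos_div_pi_mem_Icc t)).ne'
  have hff' : ∀ t ∈ Ioo (-1 : ℝ) 1, HasDerivAt f (f' t) t :=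
    fun t ht ↦ hasDerivAt_amplitude_div_slope hA hBA ht
  have hf' : ∀ t ∈ Ioo (-1 : ℝ) 1, f' t ≤ 0 := fun t _ ↦
    mul_nonpos_of_nonneg_of_nonpos (by positivity)
      (div_nonpos_of_nonpos_of_nonneg (neg_nonpos.2 (by positivity)) pi_pos.le)
  have hbound := norm_integral_cexp_mul_deriv_mul_le (φ := fun t ↦ A * t + B * gfun t)
    (by norm_num) hμ.ne' (by fun_prop) (fun t ht ↦ hasDerivAt_phase ht)
    ((by fun_prop : Continuous fun t ↦ A - B * (arccos t / π)).intervalIntegrable _ _) hf hff'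
    (intervalIntegrable_deriv_of_nonpos_of_le (by norm_num) hf hff' hf')
  rw [integral_abs_deriv_of_nonpos (by norm_num) hf hff' hf'] at hbound
  rw [osc_eq_integral hA hBA]
  refine hbound.trans ?_
  have hf_one : f 1 = B / A := by simp [f]
  have hf_neg_one : f (-1) = (A + B) / (A - B) := by simp [f, pi_ne_zero, add_comm]
  rw [hf_one, hf_neg_one, abs_of_pos hμ, add_comm |B / A|, div_mul_eq_mul_div]
  gcongr
  linarith [le_abs_self ((A + B) / (A - B)), neg_abs_le (B / A)]

end Osc

theorem osc_bound_no_critical_point :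
    ∃ C : ℝ, 0 < C ∧ ∀ μ : ℝ, 1 < μ → ∀ ξ : ℝ × ℝ, enorm2 ξ = 1 →
      0 < ξ.1 → ξ.2 < ξ.1 →
      ‖osc μ ξ‖ ≤
        (C / μ) * (|ξ.2 / ξ.1| + |(ξ.1 + ξ.2) / (ξ.1 - ξ.2)| + 1 / (ξ.1 * (ξ.1 - ξ.2))) := by
  refine ⟨2, two_pos, fun μ hμ ξ _ hA hBA ↦ ?_⟩
  have hthird_nonneg : 0 ≤ 1 / (ξ.1 * (ξ.1 - ξ.2)) := by
    have := sub_pos.2 hBA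
    positivity
  calc ‖osc μ ξ‖ ≤ 2 / μ * (|ξ.2 / ξ.1| + |(ξ.1 + ξ.2) / (ξ.1 - ξ.2)|) :=
        norm_osc_le hA hBA (zero_lt_one.trans hμ)
    _ ≤ _ := mul_le_mul_of_nonneg_left (le_add_of_nonneg_right hthird_nonneg) (by positivity)
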